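/- Let α ∈ (0,1], C ⊆ {1,…,n}, and let ũ^{k+1}, ũ^k ∈ ℝ^n, ṽ^k, ε̃^k ∈ ℝ^m satisfy: ũ^{k+1} ∈ prox_{αγ‖·‖₀}((1−α)ũ^k + αDṽ^k), supp(ũ^{k+1}) = C, and ṽ^k = S(Dᵀũ^k) + ε̃^k. Then ũ^{k+1} = 𝒯(ũ^k) + α T_C D ε̃^k, where 𝒯(u) := (1−α)T_C u + α T_C D S(Dᵀu). -/

import Mathlib

/-! A point `x ∈ prox_{t‖·‖₀}(y)` agrees with `y` on its support: replacing a nonzero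
coordinate `xᵢ` by `yᵢ` does not increase `‖x‖₀` and lowers the quadratic term by
`(xᵢ - yᵢ)² / (2t)`, so minimality forces `xᵢ = yᵢ`. Hence `ũ^{k+1} = T_C((1-α)ũ^k + αDṽ^k)`,
and the claimed identity follows by linearity of `T_C` and `D`. -/

open Matrix

noncomputable section

/-- Matrix–vector multiplication as a map between Euclidean spaces. -/
def mulVecE {n m : ℕ} (A : Matrix (Fin n) (Fin m) ℝ) (v : EuclideanSpace ℝ (Fin m)) :
    EuclideanSpace ℝ (Fin n) :=
  (EuclideanSpace.equiv (Fin n) ℝ).symm (A.mulVec ((EuclideanSpace.equiv (Fin m) ℝ) v))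

/-- The `ℓ₀` "norm": the number of nonzero components, as a real number. -/
def l0 {n : ℕ} (u : EuclideanSpace ℝ (Fin n)) : ℝ := ({i : Fin n | u i ≠ 0}).ncard

/-- The support of a vector. -/
def supp {n : ℕ} (u : EuclideanSpace ℝ (Fin n)) : Set (Fin n) := {i | u i ≠ 0}

/-- Membership `x ∈ prox_{t‖·‖₀}(y)`. -/
def InProxL0 {n : ℕ} (t : ℝ) (x y : EuclideanSpace ℝ (Fin n)) : Prop :=
  ∀ z : EuclideanSpace ℝ (Fin n),
    (1 / (2 * t)) * ‖x - y‖ ^ 2 + l0 x ≤ (1 / (2 * t)) * ‖z - y‖ ^ 2 + l0 z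

/-- The coordinate projection `T_C` onto an index set `C`. -/
def Tmat {n : ℕ} (C : Set (Fin n)) (u : EuclideanSpace ℝ (Fin n)) :
    EuclideanSpace ℝ (Fin n) :=
  (EuclideanSpace.equiv (Fin n) ℝ).symm (C.indicator (fun i => u i))

section

variable {n m : ℕ}

@[simp]
lemma Tmat_apply (C : Set (Fin n)) (u : EuclideanSpace ℝ (Fin n)) (i : Fin n) :
    Tmat C u i = C.indicator u i := rfl

lemma Tmat_add (C : Set (Fin n)) (u w : EuclideanSpace ℝ (Fin n)) :
    Tmat C (u + w) = Tmat C u + Tmat C w := by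
  ext i; simp [Set.indicator_add']

lemma Tmat_smul (C : Set (Fin n)) (c : ℝ) (u : EuclideanSpace ℝ (Fin n)) :
    Tmat C (c • u) = c • Tmat C u := by
  ext i
  exact Set.indicator_const_smul_apply C c u i

lemma mulVecE_add (A : Matrix (Fin n) (Fin m) ℝ) (v w : EuclideanSpace ℝ (Fin m)) :
    mulVecE A (v + w) = mulVecE A v + mulVecE A w := by
  ext i; simp [mulVecE, Matrix.mulVec_add]

lemma l0_mono {u w : EuclideanSpace ℝ (Fin n)} (h : supp u ⊆ supp w) : l0 u ≤ l0 w := by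
  show ((supp u).ncard : ℝ) ≤ (supp w).ncard
  exact_mod_cast Set.ncard_le_ncard h (Set.toFinite _)

lemma norm_sub_single_apply_sq {ι : Type*} [Fintype ι] [DecidableEq ι]
    (w : EuclideanSpace ℝ ι) (i : ι) :
    ‖w - EuclideanSpace.single i (w i)‖ ^ 2 = ‖w‖ ^ 2 - w i ^ 2 := by
  rw [norm_sub_sq_real, EuclideanSpace.inner_single_right, PiLp.norm_single]
  simp only [Real.ringHom_apply, Real.norm_eq_abs, sq_abs]
  ring

lemma InProxL0.apply_eq_of_ne_zero {t : ℝ} (ht : 0 < t) {x y : EuclideanSpace ℝ (Fin n)}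
    (h : InProxL0 t x y) {i : Fin n} (hi : x i ≠ 0) : x i = y i := by
  set z := x - EuclideanSpace.single i ((x - y) i)
  have hz : z - y = (x - y) - EuclideanSpace.single i ((x - y) i) := sub_right_comm _ _ _
  have hsupp : supp z ⊆ supp x := by
    intro j hj
    rcases eq_or_ne j i with rfl | hji
    · exact hi
    · simpa [supp, z, hji] using hj
  have hmin := h z
  rw [hz, norm_sub_single_apply_sq] at hmin
  have hsq : (1 / (2 * t)) * (x - y) i ^ 2 ≤ 0 := by linarith [l0_mono hsupp]
  have hsq' : (x - y) i ^ 2 ≤ 0 := nonpos_of_mul_nonpos_right hsq (by positivity)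
  exact sub_eq_zero.mp (pow_eq_zero_iff two_ne_zero |>.mp (le_antisymm hsq' (sq_nonneg _)))

lemma InProxL0.eq_Tmat_supp {t : ℝ} (ht : 0 < t) {x y : EuclideanSpace ℝ (Fin n)}
    (h : InProxL0 t x y) : x = Tmat (supp x) y := by
  ext i
  by_cases hi : x i = 0
  · simp [supp, hi]
  · simpa [supp, hi] using h.apply_eq_of_ne_zero ht hi

end

theorem stmt14_general (n m : ℕ)
    (D : Matrix (Fin n) (Fin m) ℝ)
    (γ : ℝ) (hγ : 0 < γ)
    (S : EuclideanSpace ℝ (Fin m) → EuclideanSpace ℝ (Fin m))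
    (α : ℝ) (hα0 : 0 < α)
    (C : Set (Fin n)) (uk1 uk : EuclideanSpace ℝ (Fin n))
    (vk ε : EuclideanSpace ℝ (Fin m))
    (hprox : InProxL0 (α * γ) uk1 ((1 - α) • uk + α • mulVecE D vk))
    (hsupp : supp uk1 = C)
    (hv : vk = S (mulVecE Dᵀ uk) + ε) :
    uk1 = ((1 - α) • Tmat C uk + α • Tmat C (mulVecE D (S (mulVecE Dᵀ uk)))) +
      α • Tmat C (mulVecE D ε) := by
  calc uk1 = Tmat (supp uk1) ((1 - α) • uk + α • mulVecE D vk) :=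
        hprox.eq_Tmat_supp (mul_pos hα0 hγ)
    _ = _ := by simp only [hsupp, hv, mulVecE_add, Tmat_add, Tmat_smul, smul_add, add_assoc]

/-- If `ũ^{k+1} ∈ prox_{αγ‖·‖₀}((1−α)ũ^k + αDṽ^k)`,
`supp(ũ^{k+1}) = C`, and `ṽ^k = S(Dᵀũ^k) + ε̃^k`, then
`ũ^{k+1} = 𝒯(ũ^k) + α T_C D ε̃^k`, where `𝒯(u) = (1−α)T_C u + α T_C D S(Dᵀu)`. -/
theorem stmt14 (n m p : ℕ) (ψ : EuclideanSpace ℝ (Fin p) → ℝ)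
    (hconv : ConvexOn ℝ Set.univ ψ) (hdiff : ContDiff ℝ 1 ψ)
    (hbdd : BddBelow (Set.range ψ))
    (B : Matrix (Fin p) (Fin m) ℝ) (D : Matrix (Fin n) (Fin m) ℝ) (hD : Dᵀ * D = 1)
    (lam γ : ℝ) (hlam : 0 < lam) (hγ : 0 < γ)
    (S : EuclideanSpace ℝ (Fin m) → EuclideanSpace ℝ (Fin m))
    (hS : ∀ x v, ψ (mulVecE B (S x)) + (lam / (2 * γ)) * ‖S x - x‖ ^ 2 ≤
      ψ (mulVecE B v) + (lam / (2 * γ)) * ‖v - x‖ ^ 2)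
    (α : ℝ) (hα0 : 0 < α) (hα1 : α ≤ 1)
    (C : Set (Fin n)) (uk1 uk : EuclideanSpace ℝ (Fin n))
    (vk ε : EuclideanSpace ℝ (Fin m))
    (hprox : InProxL0 (α * γ) uk1 ((1 - α) • uk + α • mulVecE D vk))
    (hsupp : supp uk1 = C)
    (hv : vk = S (mulVecE Dᵀ uk) + ε) :
    uk1 = ((1 - α) • Tmat C uk + α • Tmat C (mulVecE D (S (mulVecE Dᵀ uk)))) +
      α • Tmat C (mulVecE D ε) :=
  stmt14_general n m D γ hγ S α hα0 C uk1 uk vk ε hprox hsupp hv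

end
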